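/- arXiv:2106.06727 — 2 statements merged into one kernel-verified Lean document; each statement's English description precedes it below -/
import Mathlib

section
/- Every binary stack-free phylogenetic network is tree-based: it admits a spanning tree (as a subgraph, after suppressing degree-2 nodes) whose leaf set equals the leaf set of the network. -/
/-- A (directed) phylogenetic-network-like graph on a finite set of
natural-number labelled vertices. -/
structure PNet where
  verts : Finset ℕ
  adj : ℕ → ℕ → Prop
  adjDec : DecidableRel adj
  adj_mem : ∀ u v, adj u v → u ∈ verts ∧ v ∈ verts

attribute [instance] PNet.adjDec

namespace PNet

/-- In-degree of a vertex. -/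
def indeg (N : PNet) (v : ℕ) : ℕ := (N.verts.filter fun u => N.adj u v).card

/-- Out-degree of a vertex. -/
def outdeg (N : PNet) (v : ℕ) : ℕ := (N.verts.filter fun w => N.adj v w).card

/-- A leaf is a vertex of out-degree 0. -/
def IsLeaf (N : PNet) (v : ℕ) : Prop := v ∈ N.verts ∧ N.outdeg v = 0

/-- A reticulation node is a vertex of in-degree 2. -/
def IsRetic (N : PNet) (v : ℕ) : Prop := v ∈ N.verts ∧ N.indeg v = 2

/-- A root is a vertex of in-degree 0. -/
def IsRoot (N : PNet) (v : ℕ) : Prop := v ∈ N.verts ∧ N.indeg v = 0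

/-- The digraph is acyclic. -/
def Acyclic (N : PNet) : Prop := ∀ v, ¬ Relation.TransGen N.adj v v

/-- A binary (rooted) phylogenetic network: acyclic, a root of in-degree 0 and
out-degree 2 from which all vertices are reachable, and every other vertex is a
tree node (in 1, out 2), a reticulation node (in 2, out 1) or a leaf (in 1, out 0). -/
def IsBinary (N : PNet) : Prop :=
  N.Acyclic ∧ ∃ ρ, N.IsRoot ρ ∧ N.outdeg ρ = 2 ∧
    (∀ v ∈ N.verts, Relation.ReflTransGen N.adj ρ v) ∧
    (∀ v ∈ N.verts, v ≠ ρ →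
      (N.indeg v = 1 ∧ N.outdeg v = 2) ∨ (N.indeg v = 2 ∧ N.outdeg v = 1) ∨
      (N.indeg v = 1 ∧ N.outdeg v = 0))

/-- Tree-child: every internal node has a child that is not a reticulation. -/
def TreeChild (N : PNet) : Prop :=
  ∀ v ∈ N.verts, N.outdeg v ≠ 0 → ∃ c, N.adj v c ∧ N.indeg c ≠ 2

/-- Stack-free: no edge joins two reticulation nodes. -/
def StackFree (N : PNet) : Prop :=
  ∀ u v, N.adj u v → ¬ (N.indeg u = 2 ∧ N.indeg v = 2)

end PNet

namespace PNet

/-- Tree-based: `N` has a rooted spanning tree (a subgraph in which every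
non-root vertex has a unique parent) all of whose leaves are leaves of `N`. -/
def TreeBased (N : PNet) : Prop :=
  ∃ S : ℕ → ℕ → Prop,
    (∀ u v, S u v → N.adj u v) ∧
    (∀ v ∈ N.verts, 0 < N.indeg v → ∃! u, S u v) ∧
    (∀ v ∈ N.verts, N.indeg v = 0 → ∀ u, ¬ S u v) ∧
    (∀ v ∈ N.verts, (∀ w, ¬ S v w) → N.outdeg v = 0)

end PNet

/-!
Call a non-leaf vertex *omnian* if all its children are reticulations. A binary network is
tree-based as soon as the omnians can be matched injectively to children of theirs: each matched
reticulation keeps the arc from its partner, every other reticulation keeps an arbitrary incoming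
arc, and then every non-leaf vertex keeps an outgoing arc (a non-omnian one the arc to its
non-reticulation child, whose only parent it is). In a stack-free network an omnian is not a
reticulation, so it has two children, while each reticulation has only two parents; double counting
gives Hall's condition for the matching.
-/

open Finset Function

/-- Hall's condition holds by double counting the incidences between `s` and `s.biUnion t`. -/
theorem Finset.exists_injective_of_le_card_of_card_filter_le {ι α : Type*} [DecidableEq α]
    (t : ι → Finset α) {k : ℕ} (hk : 0 < k) (ht : ∀ i, k ≤ #(t i))
    (hdeg : ∀ (s : Finset ι) (a : α), #{i ∈ s | a ∈ t i} ≤ k) :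
    ∃ f : ι → α, Injective f ∧ ∀ i, f i ∈ t i := by
  refine (all_card_le_biUnion_card_iff_exists_injective t).mp fun s => ?_
  refine Nat.le_of_mul_le_mul_right (card_mul_le_card_mul (fun i a => a ∈ t i) ?_ ?_) hk
  · intro i hi
    refine (ht i).trans (card_le_card fun a ha => ?_)
    exact mem_filter.mpr ⟨mem_biUnion.mpr ⟨i, hi, ha⟩, ha⟩
  · exact fun a _ => hdeg s a

namespace PNet

variable {N : PNet}

/-- An *omnian* vertex, in the terminology of Jetten and van Iersel. -/
def IsOmnian (N : PNet) (v : ℕ) : Prop :=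
  v ∈ N.verts ∧ N.outdeg v ≠ 0 ∧ ∀ w, N.adj v w → N.indeg w = 2

def children (N : PNet) (v : ℕ) : Finset ℕ := N.verts.filter (N.adj v)

theorem mem_children {v w : ℕ} : w ∈ N.children v ↔ N.adj v w :=
  mem_filter.trans ⟨And.right, fun h => ⟨(N.adj_mem v w h).2, h⟩⟩

theorem card_filter_mem_children_le_indeg {P : ℕ → Prop} (s : Finset (Subtype P)) (w : ℕ) :
    #{p ∈ s | w ∈ N.children p.1} ≤ N.indeg w := by
  refine card_le_card_of_injOn Subtype.val (fun p hp => ?_) fun p _ q _ => Subtype.ext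
  have hpw := mem_children.mp (mem_filter.mp hp).2
  exact mem_filter.mpr ⟨(N.adj_mem _ _ hpw).1, hpw⟩

theorem indeg_pos_of_adj {u v : ℕ} (h : N.adj u v) : 0 < N.indeg v :=
  card_pos.mpr ⟨u, mem_filter.mpr ⟨(N.adj_mem u v h).1, h⟩⟩

theorem exists_adj_of_indeg_pos {v : ℕ} (h : 0 < N.indeg v) : ∃ u, N.adj u v := by
  obtain ⟨u, hu⟩ := card_pos.mp h
  exact ⟨u, (mem_filter.mp hu).2⟩

theorem exists_adj_of_outdeg_ne_zero {v : ℕ} (h : N.outdeg v ≠ 0) : ∃ w, N.adj v w := by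
  obtain ⟨w, hw⟩ := card_pos.mp (Nat.pos_of_ne_zero h)
  exact ⟨w, (mem_filter.mp hw).2⟩

theorem eq_of_adj_of_indeg_eq_one {u u' w : ℕ} (hw : N.indeg w = 1) (hu : N.adj u w)
    (hu' : N.adj u' w) : u = u' :=
  card_le_one.mp hw.le u (mem_filter.mpr ⟨(N.adj_mem u w hu).1, hu⟩)
    u' (mem_filter.mpr ⟨(N.adj_mem u' w hu').1, hu'⟩)

theorem IsBinary.indeg_le_two (hbin : N.IsBinary) (v : ℕ) : N.indeg v ≤ 2 := by
  obtain ⟨-, ρ, hρ, -, -, hclass⟩ := hbin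
  by_cases hv : v ∈ N.verts
  · by_cases hvρ : v = ρ
    · exact hvρ ▸ hρ.2.le.trans (by norm_num)
    · rcases hclass v hv hvρ with h | h | h <;> omega
  · by_contra hlt
    obtain ⟨u, hu⟩ := exists_adj_of_indeg_pos (N := N) (by omega : 0 < N.indeg v)
    exact hv (N.adj_mem u v hu).2

theorem IsBinary.indeg_eq_one (hbin : N.IsBinary) {v : ℕ} (hv : v ∈ N.verts)
    (hpos : 0 < N.indeg v) (hv2 : N.indeg v ≠ 2) : N.indeg v = 1 := by
  obtain ⟨-, ρ, hρ, -, -, hclass⟩ := hbin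
  have hvρ : v ≠ ρ := by rintro rfl; exact hpos.ne' hρ.2
  rcases hclass v hv hvρ with h | h | h <;> omega

theorem IsBinary.outdeg_eq_two (hbin : N.IsBinary) {v : ℕ} (hv : v ∈ N.verts)
    (hout : N.outdeg v ≠ 0) (hv2 : N.indeg v ≠ 2) : N.outdeg v = 2 := by
  obtain ⟨-, ρ, -, hρout, -, hclass⟩ := hbin
  by_cases hvρ : v = ρ
  · exact hvρ ▸ hρout
  · rcases hclass v hv hvρ with h | h | h <;> omega

theorem StackFree.indeg_ne_two_of_isOmnian (hsf : N.StackFree) {v : ℕ} (hv : N.IsOmnian v) :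
    N.indeg v ≠ 2 := by
  obtain ⟨w, hw⟩ := exists_adj_of_outdeg_ne_zero hv.2.1
  exact fun hv2 => hsf v w hw ⟨hv2, hv.2.2 w hw⟩

theorem treeBased_of_parent (parent : ℕ → ℕ)
    (hparent : ∀ v ∈ N.verts, 0 < N.indeg v → N.adj (parent v) v)
    (hchild : ∀ v ∈ N.verts, N.outdeg v ≠ 0 → ∃ w, N.adj v w ∧ parent w = v) :
    N.TreeBased := by
  refine ⟨fun u v => N.adj u v ∧ parent v = u, fun u v h => h.1, ?_, ?_, ?_⟩
  · exact fun v hv hpos => ⟨parent v, ⟨hparent v hv hpos, rfl⟩, fun u hu => hu.2.symm⟩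
  · exact fun v _ h0 u hu => (indeg_pos_of_adj hu.1).ne' h0
  · intro v hv hnone
    by_contra hout
    obtain ⟨w, hvw, hw⟩ := hchild v hv hout
    exact hnone w ⟨hvw, hw⟩

theorem IsBinary.treeBased_of_injective_omnian_child (hbin : N.IsBinary)
    (f : {v // N.IsOmnian v} → ℕ) (hf : Injective f) (hadj : ∀ p, N.adj p.1 (f p)) :
    N.TreeBased := by
  set parent : ℕ → ℕ :=
    extend f Subtype.val fun r => Classical.epsilon fun u => N.adj u r with hparent_def
  have hparent : ∀ v, 0 < N.indeg v → N.adj (parent v) v := by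
    intro v hpos
    by_cases hv : ∃ p, f p = v
    · obtain ⟨p, rfl⟩ := hv
      rw [hparent_def, hf.extend_apply]
      exact hadj p
    · rw [hparent_def, extend_apply' _ _ _ hv]
      exact Classical.epsilon_spec (exists_adj_of_indeg_pos hpos)
  refine treeBased_of_parent parent (fun v _ => hparent v) fun v hv hout => ?_
  by_cases hom : N.IsOmnian v
  · exact ⟨f ⟨v, hom⟩, hadj ⟨v, hom⟩, hf.extend_apply _ _ _⟩
  · obtain ⟨w, hvw, hw2⟩ : ∃ w, N.adj v w ∧ N.indeg w ≠ 2 := by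
      simpa [IsOmnian, hv, hout] using hom
    have hwv := (N.adj_mem v w hvw).2
    have hw1 := hbin.indeg_eq_one hwv (indeg_pos_of_adj hvw) hw2
    exact ⟨w, hvw, eq_of_adj_of_indeg_eq_one hw1 (hparent w (by omega)) hvw⟩

theorem IsBinary.exists_injective_omnian_child (hbin : N.IsBinary) (hsf : N.StackFree) :
    ∃ f : {v // N.IsOmnian v} → ℕ, Injective f ∧ ∀ p, N.adj p.1 (f p) := by
  obtain ⟨f, hf, hmem⟩ := Finset.exists_injective_of_le_card_of_card_filter_le
    (fun p : {v // N.IsOmnian v} => N.children p.1) two_pos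
    (fun p => (hbin.outdeg_eq_two p.2.1 p.2.2.1 (hsf.indeg_ne_two_of_isOmnian p.2)).ge)
    (fun s w => (card_filter_mem_children_le_indeg s w).trans (hbin.indeg_le_two w))
  exact ⟨f, hf, fun p => mem_children.mp (hmem p)⟩

end PNet

open PNet in
/-- Every binary stack-free phylogenetic network is tree-based. -/
theorem stmt5 (N : PNet) (hbin : N.IsBinary) (hsf : N.StackFree) :
    N.TreeBased := by
  obtain ⟨f, hf, hadj⟩ := hbin.exists_injective_omnian_child hsf
  exact hbin.treeBased_of_injective_omnian_child f hf hadj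
end

section
/- Every binary phylogenetic network obtained from the single-leaf network by a finite sequence of speciation events and m-type hybrid-speciation events is a tree-child network; moreover it admits a temporal labelling (an assignment of times to internal nodes compatible with the event order in which the two parents of each reticulation receive equal time and each tree edge strictly increases time). -/
namespace PNet

/-- The network consisting of a single leaf (one vertex, no edges). -/
def SingleLeaf (N : PNet) : Prop := ∃ v, N.verts = {v} ∧ ∀ u w, ¬ N.adj u w

/-- Speciation event: a leaf `x` is replaced by a tree node with two new leaf
children `a` and `b`. -/
def Speciation (N N' : PNet) : Prop :=
  ∃ x a b, N.IsLeaf x ∧ a ∉ N.verts ∧ b ∉ N.verts ∧ a ≠ b ∧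
    N'.verts = insert a (insert b N.verts) ∧
    ∀ u v, N'.adj u v ↔ (N.adj u v ∨ (u = x ∧ v = a) ∨ (u = x ∧ v = b))

/-- y-type merging event: two distinct leaves `x` and `y` (with distinct
parents) are glued into a reticulation node with in-edges from the former
parents of `x` and `y` and a single new leaf child `z`. -/
def YMerge (N N' : PNet) : Prop :=
  ∃ x y z px py, x ≠ y ∧ N.IsLeaf x ∧ N.IsLeaf y ∧ z ∉ N.verts ∧
    N.adj px x ∧ N.adj py y ∧ px ≠ py ∧
    N'.verts = insert z (N.verts \ {y}) ∧
    ∀ u v, N'.adj u v ↔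
      ((N.adj u v ∧ v ≠ y) ∨ (u = py ∧ v = x) ∨ (u = x ∧ v = z))

/-- n-type (HGT) reticulation event: subdivide the pendant edges above two
distinct leaves `x` and `y` with new nodes `u₀` and `v₀` and add the arc
`(u₀, v₀)`, making `v₀` a reticulation node; `x` and `y` remain leaves. -/
def HGT (N N' : PNet) : Prop :=
  ∃ x y u₀ v₀ px py, x ≠ y ∧ N.IsLeaf x ∧ N.IsLeaf y ∧
    N.adj px x ∧ N.adj py y ∧
    u₀ ∉ N.verts ∧ v₀ ∉ N.verts ∧ u₀ ≠ v₀ ∧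
    N'.verts = insert u₀ (insert v₀ N.verts) ∧
    ∀ a b, N'.adj a b ↔
      ((N.adj a b ∧ b ≠ x ∧ b ≠ y) ∨ (a = px ∧ b = u₀) ∨ (a = py ∧ b = v₀) ∨
        (a = u₀ ∧ b = x) ∨ (a = v₀ ∧ b = y) ∨ (a = u₀ ∧ b = v₀))

/-- m-type hybrid-speciation event: two distinct leaves `x` and `y` each become
tree nodes, with new leaf children `x'` resp. `y'` and with edges into a shared
new reticulation node `w`, which has a single new leaf child `z`. -/
def MType (N N' : PNet) : Prop :=
  ∃ x y x' y' w z, x ≠ y ∧ N.IsLeaf x ∧ N.IsLeaf y ∧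
    x' ∉ N.verts ∧ y' ∉ N.verts ∧ w ∉ N.verts ∧ z ∉ N.verts ∧
    x' ≠ y' ∧ x' ≠ w ∧ x' ≠ z ∧ y' ≠ w ∧ y' ≠ z ∧ w ≠ z ∧
    N'.verts = insert x' (insert y' (insert w (insert z N.verts))) ∧
    ∀ a b, N'.adj a b ↔
      (N.adj a b ∨ (a = x ∧ b = x') ∨ (a = x ∧ b = w) ∨
        (a = y ∧ b = y') ∨ (a = y ∧ b = w) ∨ (a = w ∧ b = z))

/-- Extinction event: delete a leaf `x` and suppress its resulting degree-two
parent `p` (when `p` is not the root). -/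
def Extinct (N N' : PNet) : Prop :=
  ∃ x p c, N.IsLeaf x ∧ N.adj p x ∧ N.adj p c ∧ c ≠ x ∧
    ((N.indeg p = 0 ∧ N'.verts = N.verts \ {x} ∧
        ∀ u v, N'.adj u v ↔ (N.adj u v ∧ v ≠ x)) ∨
     (∃ q, N.adj q p ∧ N'.verts = N.verts \ {x, p} ∧
        ∀ u v, N'.adj u v ↔
          ((N.adj u v ∧ u ≠ p ∧ v ≠ p ∧ v ≠ x) ∨ (u = q ∧ v = c))))

/-- Isomorphism of (leaf-unlabelled) network topologies. -/
def Iso (M N : PNet) : Prop :=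
  ∃ f : ℕ → ℕ, Set.BijOn f ↑M.verts ↑N.verts ∧
    ∀ u v, u ∈ M.verts → v ∈ M.verts → (M.adj u v ↔ N.adj (f u) (f v))

end PNet

namespace PNet

/-- A temporal labelling: an assignment of times to nodes such that both
endpoints of each hybrid edge get equal times, and the target of each
non-hybrid edge gets a strictly larger time than its source. -/
def Temporal (N : PNet) : Prop :=
  ∃ t : ℕ → ℝ, ∀ u v, N.adj u v →
    (N.indeg v = 2 → t u = t v) ∧ (N.indeg v ≠ 2 → t u < t v)

end PNet

/-!
Both kinds of event only hang new vertices below current leaves, and the new vertices that are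
not leaves are reticulations whose parents are former leaves. Tree-child is preserved because every
vertex that gains children gains a new leaf child. For the times we carry the invariant "there is a
temporal labelling in which every leaf has the same time `T`, later than every internal
vertex". After an event, keep the times of the old internal vertices, give every leaf time `T + 1`,
and give time `T` to the remaining vertices (former leaves and new reticulations): every new edge
then either joins two vertices of time `T` into a reticulation or goes from time `T` to a leaf.
-/

namespace PNet

variable {N N' : PNet} {u v : ℕ}

lemma outdeg_eq_zero_iff : N.outdeg v = 0 ↔ ∀ w, ¬ N.adj v w := by
  simp only [outdeg, Finset.card_eq_zero, Finset.filter_eq_empty_iff]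
  exact ⟨fun h w hw => h (N.adj_mem v w hw).2 hw, fun h w _ => h w⟩

lemma not_adj_of_not_mem_right (hv : v ∉ N.verts) (u : ℕ) : ¬ N.adj u v :=
  fun huv => hv (N.adj_mem u v huv).2

lemma not_adj_of_not_mem_left (hu : u ∉ N.verts) (v : ℕ) : ¬ N.adj u v :=
  fun huv => hu (N.adj_mem u v huv).1

lemma isLeaf_iff : N.IsLeaf v ↔ v ∈ N.verts ∧ ∀ w, ¬ N.adj v w := by
  rw [IsLeaf, outdeg_eq_zero_iff]

lemma not_isLeaf_of_adj (h : N.adj u v) : ¬ N.IsLeaf u :=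
  fun hu => (isLeaf_iff.1 hu).2 v h

lemma indeg_eq_card (s : Finset ℕ) (h : ∀ u, N.adj u v ↔ u ∈ s) : N.indeg v = s.card := by
  unfold indeg
  congr 1
  ext u
  rw [Finset.mem_filter, ← h]
  exact ⟨And.right, fun hu => ⟨(N.adj_mem u v hu).1, hu⟩⟩

structure LeafSyncTemporal (N : PNet) (t : ℕ → ℝ) (T : ℝ) : Prop where
  adj : ∀ u v, N.adj u v → (N.indeg v = 2 → t u = t v) ∧ (N.indeg v ≠ 2 → t u < t v)
  leaf : ∀ v, N.IsLeaf v → t v = T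
  lt_of_not_isLeaf : ∀ v ∈ N.verts, ¬ N.IsLeaf v → t v < T

namespace LeafSyncTemporal

variable {t : ℕ → ℝ} {T : ℝ}

lemma temporal (h : LeafSyncTemporal N t T) : N.Temporal := ⟨t, h.adj⟩

/-- A reticulation shares its time with its parents, which are internal. -/
lemma indeg_ne_two_of_isLeaf (h : LeafSyncTemporal N t T) (hv : N.IsLeaf v) :
    N.indeg v ≠ 2 := by
  intro h2
  obtain ⟨u, hu⟩ : (N.verts.filter fun u => N.adj u v).Nonempty := by
    rw [← Finset.card_pos]
    change 0 < N.indeg v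
    omega
  rw [Finset.mem_filter] at hu
  have htu : t u < T := h.lt_of_not_isLeaf u hu.1 (not_isLeaf_of_adj hu.2)
  have := (h.adj u v hu.2).1 h2
  rw [h.leaf v hv] at this
  exact htu.ne this

end LeafSyncTemporal

lemma SingleLeaf.treeChild (h : N.SingleLeaf) : N.TreeChild := by
  obtain ⟨-, -, hadj⟩ := h
  exact fun v _ hv => absurd (outdeg_eq_zero_iff.2 (hadj v)) hv

lemma SingleLeaf.leafSyncTemporal (h : N.SingleLeaf) : LeafSyncTemporal N (fun _ => 0) 0 := by
  obtain ⟨-, -, hadj⟩ := h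
  exact ⟨fun u v huv => absurd huv (hadj u v), fun _ _ => rfl,
    fun v hv hl => absurd (isLeaf_iff.2 ⟨hv, hadj v⟩) hl⟩

structure GrowsBelowLeaves (N N' : PNet) : Prop where
  adj_iff : ∀ u v, v ∈ N.verts → (N'.adj u v ↔ N.adj u v)
  isLeaf_or_not_mem : ∀ u v, N'.adj u v → v ∉ N.verts → N.IsLeaf u ∨ u ∉ N.verts
  indeg_eq_two_iff : ∀ v ∈ N'.verts, v ∉ N.verts → (N'.indeg v = 2 ↔ ¬ N'.IsLeaf v)
  exists_adj_indeg_ne_two : ∀ u v, N'.adj u v → v ∉ N.verts → ∃ c, N'.adj u c ∧ N'.indeg c ≠ 2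

namespace GrowsBelowLeaves

lemma of_adj_iff {E : ℕ → ℕ → Prop} (hA : ∀ u v, N'.adj u v ↔ N.adj u v ∨ E u v)
    (hE : ∀ u v, E u v → v ∉ N.verts ∧ (N.IsLeaf u ∨ u ∉ N.verts))
    (hret : ∀ v ∈ N'.verts, v ∉ N.verts → (N'.indeg v = 2 ↔ ¬ N'.IsLeaf v))
    (htc : ∀ u v, E u v → ∃ c, N'.adj u c ∧ N'.indeg c ≠ 2) : GrowsBelowLeaves N N' where
  adj_iff u v hv := by
    rw [hA, or_iff_left_iff_imp]
    exact fun huv => absurd hv (hE u v huv).1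
  isLeaf_or_not_mem u v huv hv := by
    rcases (hA u v).1 huv with huv | huv
    · exact absurd (N.adj_mem u v huv).2 hv
    · exact (hE u v huv).2
  indeg_eq_two_iff := hret
  exists_adj_indeg_ne_two u v huv hv := by
    rcases (hA u v).1 huv with huv | huv
    · exact absurd (N.adj_mem u v huv).2 hv
    · exact htc u v huv

variable (h : GrowsBelowLeaves N N')
include h

lemma adj_of_adj (huv : N.adj u v) : N'.adj u v :=
  (h.adj_iff u v (N.adj_mem u v huv).2).2 huv

lemma indeg_eq (hv : v ∈ N.verts) : N'.indeg v = N.indeg v :=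
  indeg_eq_card _ fun u => by
    rw [h.adj_iff u v hv, Finset.mem_filter]
    exact ⟨fun hu => ⟨(N.adj_mem u v hu).1, hu⟩, And.right⟩

lemma isLeaf_of_isLeaf (hv : v ∈ N.verts) (hl : N'.IsLeaf v) : N.IsLeaf v :=
  isLeaf_iff.2 ⟨hv, fun w hw => (isLeaf_iff.1 hl).2 w (h.adj_of_adj hw)⟩

lemma treeChild (hN : N.TreeChild) : N'.TreeChild := by
  intro u hu hout
  obtain ⟨v, huv⟩ : ∃ v, N'.adj u v := by
    by_contra! hno
    exact hout (outdeg_eq_zero_iff.2 hno)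
  by_cases hv : v ∈ N.verts
  · have huvN := (h.adj_iff u v hv).1 huv
    have houtN : N.outdeg u ≠ 0 := fun h0 => outdeg_eq_zero_iff.1 h0 v huvN
    obtain ⟨c, huc, hc⟩ := hN u (N.adj_mem u v huvN).1 houtN
    exact ⟨c, h.adj_of_adj huc, h.indeg_eq (N.adj_mem u c huc).2 ▸ hc⟩
  · exact h.exists_adj_indeg_ne_two u v huv hv

lemma leafSyncTemporal {t : ℕ → ℝ} {T : ℝ} (hN : LeafSyncTemporal N t T) :
    ∃ t', LeafSyncTemporal N' t' (T + 1) := by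
  classical
  let t' : ℕ → ℝ := fun v =>
    if v ∈ N.verts ∧ ¬ N.IsLeaf v then t v else if N'.IsLeaf v then T + 1 else T
  have ht'_old {v} (hv : v ∈ N.verts) (hl : ¬ N.IsLeaf v) : t' v = t v := if_pos ⟨hv, hl⟩
  have ht'_leaf {v} (hl : N'.IsLeaf v) : t' v = T + 1 :=
    (if_neg fun hv => hv.2 (h.isLeaf_of_isLeaf hv.1 hl)).trans (if_pos hl)
  have ht'_new {v} (hv : ¬ (v ∈ N.verts ∧ ¬ N.IsLeaf v)) (hl : ¬ N'.IsLeaf v) : t' v = T :=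
    (if_neg hv).trans (if_neg hl)
  have hT_le {v} (hv : ¬ (v ∈ N.verts ∧ ¬ N.IsLeaf v)) : T ≤ t' v := by
    by_cases hl : N'.IsLeaf v
    · rw [ht'_leaf hl]; linarith
    · rw [ht'_new hv hl]
  refine ⟨t', ⟨fun u v huv => ?_, fun v => ht'_leaf, fun v hv hl => ?_⟩⟩
  · by_cases hvN : v ∈ N.verts
    · have huvN := (h.adj_iff u v hvN).1 huv
      have huN := (N.adj_mem u v huvN).1
      rw [h.indeg_eq hvN, ht'_old huN (not_isLeaf_of_adj huvN)]
      by_cases hvl : N.IsLeaf v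
      · refine ⟨fun h2 => absurd h2 (hN.indeg_ne_two_of_isLeaf hvl), fun _ => ?_⟩
        have := hN.lt_of_not_isLeaf u huN (not_isLeaf_of_adj huvN)
        linarith [hT_le (v := v) fun hv => hv.2 hvl]
      · rw [ht'_old hvN hvl]
        exact hN.adj u v huvN
    · have hu : ¬ (u ∈ N.verts ∧ ¬ N.IsLeaf u) := by
        rcases h.isLeaf_or_not_mem u v huv hvN with hl | hu
        · exact fun hu => hu.2 hl
        · exact fun hu' => hu hu'.1
      rw [ht'_new hu (not_isLeaf_of_adj huv)]
      have hv' := h.indeg_eq_two_iff v (N'.adj_mem u v huv).2 hvN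
      constructor
      · intro h2
        exact (ht'_new (fun hv => hvN hv.1) (hv'.1 h2)).symm
      · intro h2
        rw [ht'_leaf (not_not.1 (mt hv'.2 h2))]
        linarith
  · by_cases hold : v ∈ N.verts ∧ ¬ N.IsLeaf v
    · rw [ht'_old hold.1 hold.2]
      linarith [hN.lt_of_not_isLeaf v hold.1 hold.2]
    · rw [ht'_new hold hl]
      linarith

end GrowsBelowLeaves

lemma Speciation.growsBelowLeaves (h : Speciation N N') : GrowsBelowLeaves N N' := by
  obtain ⟨x, a, b, hx, ha, hb, hab, hV, hA⟩ := h
  have hxa : x ≠ a := ne_of_mem_of_not_mem hx.1 ha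
  have hxb : x ≠ b := ne_of_mem_of_not_mem hx.1 hb
  have ha1 : N'.indeg a = 1 :=
    indeg_eq_card {x} fun u => by simp [hA, not_adj_of_not_mem_right ha, hab]
  have hb1 : N'.indeg b = 1 :=
    indeg_eq_card {x} fun u => by simp [hA, not_adj_of_not_mem_right hb, hab.symm]
  have hal : N'.IsLeaf a := isLeaf_iff.2 ⟨by simp [hV], fun w => by
    simp [hA, not_adj_of_not_mem_left ha, hxa.symm]⟩
  have hbl : N'.IsLeaf b := isLeaf_iff.2 ⟨by simp [hV], fun w => by
    simp [hA, not_adj_of_not_mem_left hb, hxb.symm]⟩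
  refine .of_adj_iff (E := fun u v => u = x ∧ v = a ∨ u = x ∧ v = b) hA ?_ ?_ ?_
  · rintro u v (⟨rfl, rfl⟩ | ⟨rfl, rfl⟩)
    exacts [⟨ha, .inl hx⟩, ⟨hb, .inl hx⟩]
  · intro v hv hvN
    simp only [hV, Finset.mem_insert] at hv
    rcases hv with rfl | rfl | hv
    · simp [ha1, hal]
    · simp [hb1, hbl]
    · exact absurd hv hvN
  · rintro u v (⟨rfl, -⟩ | ⟨rfl, -⟩) <;>
      exact ⟨a, (hA _ a).2 (.inr (.inl ⟨rfl, rfl⟩)), by omega⟩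

lemma MType.growsBelowLeaves (h : MType N N') : GrowsBelowLeaves N N' := by
  obtain ⟨x, y, x', y', w, z, hxy, hx, hy, hx', hy', hw, hz,
    hx'y', hx'w, hx'z, hy'w, hy'z, hwz, hV, hA⟩ := h
  have hne {c d} (hc : c ∈ N.verts) (hd : d ∉ N.verts) : d ≠ c :=
    (ne_of_mem_of_not_mem hc hd).symm
  have hx'1 : N'.indeg x' = 1 :=
    indeg_eq_card {x} fun u => by simp [hA, not_adj_of_not_mem_right hx', hx'w, hx'y', hx'z]
  have hy'1 : N'.indeg y' = 1 :=
    indeg_eq_card {y} fun u => by simp [hA, not_adj_of_not_mem_right hy', hx'y'.symm, hy'w, hy'z]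
  have hw2 : N'.indeg w = 2 := by
    rw [indeg_eq_card {x, y} fun u => by
      simp [hA, not_adj_of_not_mem_right hw, hx'w.symm, hy'w.symm, hwz], Finset.card_pair hxy]
  have hz1 : N'.indeg z = 1 :=
    indeg_eq_card {w} fun u => by
      simp [hA, not_adj_of_not_mem_right hz, hx'z.symm, hy'z.symm, hwz.symm]
  have hx'l : N'.IsLeaf x' := isLeaf_iff.2 ⟨by simp [hV], fun v => by
    simp [hA, not_adj_of_not_mem_left hx', hne hx.1 hx', hne hy.1 hx', hx'w]⟩
  have hy'l : N'.IsLeaf y' := isLeaf_iff.2 ⟨by simp [hV], fun v => by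
    simp [hA, not_adj_of_not_mem_left hy', hne hx.1 hy', hne hy.1 hy', hy'w]⟩
  have hzl : N'.IsLeaf z := isLeaf_iff.2 ⟨by simp [hV], fun v => by
    simp [hA, not_adj_of_not_mem_left hz, hne hx.1 hz, hne hy.1 hz, hwz.symm]⟩
  have hxx' : N'.adj x x' := (hA x x').2 (by simp)
  have hyy' : N'.adj y y' := (hA y y').2 (by simp)
  have hwz' : N'.adj w z := (hA w z).2 (by simp)
  refine .of_adj_iff (E := fun a b => a = x ∧ b = x' ∨ a = x ∧ b = w ∨ a = y ∧ b = y' ∨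
      a = y ∧ b = w ∨ a = w ∧ b = z)
    hA ?_ ?_ ?_
  · rintro u v (⟨rfl, rfl⟩ | ⟨rfl, rfl⟩ | ⟨rfl, rfl⟩ | ⟨rfl, rfl⟩ | ⟨rfl, rfl⟩)
    exacts [⟨hx', .inl hx⟩, ⟨hw, .inl hx⟩, ⟨hy', .inl hy⟩, ⟨hw, .inl hy⟩, ⟨hz, .inr hw⟩]
  · intro v hv hvN
    simp only [hV, Finset.mem_insert] at hv
    rcases hv with rfl | rfl | rfl | rfl | hv
    · simp [hx'1, hx'l]
    · simp [hy'1, hy'l]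
    · simp [hw2, not_isLeaf_of_adj hwz']
    · simp [hz1, hzl]
    · exact absurd hv hvN
  · rintro u v (⟨rfl, -⟩ | ⟨rfl, -⟩ | ⟨rfl, -⟩ | ⟨rfl, -⟩ | ⟨rfl, -⟩)
    exacts [⟨x', hxx', by omega⟩, ⟨x', hxx', by omega⟩, ⟨y', hyy', by omega⟩,
      ⟨y', hyy', by omega⟩, ⟨z, hwz', by omega⟩]

end PNet

open PNet in
/-- Every network obtained from the single-leaf network by speciation events
and m-type hybrid-speciation events is tree-child and admits a temporal
labelling. -/
theorem stmt9 (N₀ N : PNet) (h0 : SingleLeaf N₀)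
    (hgen : Relation.ReflTransGen (fun A B => Speciation A B ∨ MType A B) N₀ N) :
    N.TreeChild ∧ N.Temporal := by
  have key : N.TreeChild ∧ ∃ t T, LeafSyncTemporal N t T := by
    induction hgen with
    | refl => exact ⟨h0.treeChild, _, _, h0.leafSyncTemporal⟩
    | tail _ hstep ih =>
      obtain ⟨hTC, t, T, hL⟩ := ih
      have hG := hstep.elim Speciation.growsBelowLeaves MType.growsBelowLeaves
      obtain ⟨t', hL'⟩ := hG.leafSyncTemporal hL
      exact ⟨hG.treeChild hTC, t', T + 1, hL'⟩
  obtain ⟨hTC, t, T, hL⟩ := key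
  exact ⟨hTC, hL.temporal⟩
end
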